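/- Let R = diag(R_{θ₁}, R_{θ₂}) act on ℝ⁴ with {θ₁, θ₂, π} linearly independent over ℚ. Then R is not strongly 2-supercyclic: there is no 2-dimensional subspace M of ℝ⁴ such that {R^k(M) : k ∈ ℕ} is dense in the Grassmannian P₂(ℝ⁴). -/

import Mathlib

/-!
The block rotation `R` preserves the indefinite quadratic form `q(x) = |x₁|² - |x₂|²` on
`ℝ² × ℝ²`. The planes on which `q` is positive definite form a nonempty open subset of the
Grassmannian, and so do the planes on which `-q` is. A dense orbit `Rᵏ(M)` meets both, and since
each `Rᵏ` is injective and preserves `q`, the plane `M` itself would be both positive and negative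
definite for `q`.
-/

open Matrix

/-- The `n`-th Grassmannian of a topological real vector space `X`, i.e. the set of
`n`-dimensional subspaces, carries the quotient topology coinduced by the span map
from linearly independent `n`-tuples. -/
noncomputable instance grassTopology (X : Type*) [AddCommGroup X] [Module ℝ X]
    [TopologicalSpace X] (n : ℕ) :
    TopologicalSpace {M : Submodule ℝ X // Module.finrank ℝ M = n} :=
  TopologicalSpace.coinduced
    (fun v : {v : Fin n → X // LinearIndependent ℝ v} =>
      (⟨Submodule.span ℝ (Set.range v.1), by
        rw [finrank_span_eq_card v.2, Fintype.card_fin]⟩ :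
        {M : Submodule ℝ X // Module.finrank ℝ M = n}))
    inferInstance

/-- `M` is a strongly `n`-supercyclic subspace for `T`: it is `n`-dimensional, all its
iterates `T^k(M)` are `n`-dimensional, and the orbit `{T^k(M) : k ∈ ℕ}` is dense in the
`n`-th Grassmannian. -/
def SCSubspace {X : Type*} [AddCommGroup X] [Module ℝ X] [TopologicalSpace X]
    (n : ℕ) (T : X →ₗ[ℝ] X) (M : Submodule ℝ X) : Prop :=
  Module.finrank ℝ M = n ∧ (∀ k : ℕ, Module.finrank ℝ (M.map (T ^ k)) = n) ∧
    Dense {P : {M : Submodule ℝ X // Module.finrank ℝ M = n} |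
      ∃ k : ℕ, (P : Submodule ℝ X) = M.map (T ^ k)}

/-- `T` is strongly `n`-supercyclic if it admits a strongly `n`-supercyclic subspace. -/
def StronglyNSupercyclic {X : Type*} [AddCommGroup X] [Module ℝ X] [TopologicalSpace X]
    (n : ℕ) (T : X →ₗ[ℝ] X) : Prop :=
  ∃ M : Submodule ℝ X, SCSubspace n T M

/-- The 2×2 rotation matrix of angle `θ`. -/
noncomputable def rotM (θ : ℝ) : Matrix (Fin 2) (Fin 2) ℝ :=
  !![Real.cos θ, -Real.sin θ; Real.sin θ, Real.cos θ]

open Set Submodule Function QuadraticMap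

theorem binary_quadratic_pos_iff {A B C : ℝ} :
    (∀ a b : ℝ, (a, b) ≠ 0 → 0 < a * a * A + a * b * B + b * b * C) ↔
      0 < A ∧ B ^ 2 < 4 * A * C := by
  constructor
  · intro h
    have hA : 0 < A := by simpa using h 1 0 (by simp)
    -- at `(a, b) = (-B, 2A)` the form equals `A (4AC - B²)`
    have := h (-B) (2 * A) (by simp [hA.ne'])
    exact ⟨hA, by nlinarith⟩
  · rintro ⟨hA, hD⟩ a b hab
    rcases eq_or_ne b 0 with rfl | hb
    · have : a ≠ 0 := by simpa using hab
      simpa using mul_pos (mul_self_pos.2 this) hA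
    · -- `4A (a²A + abB + b²C) = (2aA + bB)² + b² (4AC - B²)`
      nlinarith [sq_nonneg (2 * a * A + b * B), mul_pos (mul_self_pos.2 hb) (sub_pos.2 hD)]

theorem QuadraticMap.map_smul_add_smul {R M N : Type*} [CommRing R] [AddCommGroup M] [Module R M]
    [AddCommGroup N] [Module R N] (Q : QuadraticMap R M N) (a b : R) (x y : M) :
    Q (a • x + b • y) = (a * a) • Q x + (a * b) • polar Q x y + (b * b) • Q y := by
  rw [QuadraticMap.map_add (⇑Q), Q.map_smul, Q.map_smul, polar_smul_left, polar_smul_right,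
    smul_smul]
  abel

theorem QuadraticForm.pos_on_span_fin_two_iff {X : Type*} [AddCommGroup X] [Module ℝ X]
    (Q : QuadraticForm ℝ X) {v : Fin 2 → X} (hv : LinearIndependent ℝ v) :
    (∀ z ∈ span ℝ (range v), z ≠ 0 → 0 < Q z) ↔
      0 < Q (v 0) ∧ polar Q (v 0) (v 1) ^ 2 < 4 * Q (v 0) * Q (v 1) := by
  obtain ⟨x, y, rfl⟩ : ∃ x y, v = ![x, y] := ⟨v 0, v 1, (FinVec.etaExpand_eq v).symm⟩
  have hne : ∀ a b : ℝ, a • x + b • y ≠ 0 ↔ (a, b) ≠ 0 := fun a b => by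
    refine ⟨fun h hab => h ?_, fun hab h => hab ?_⟩
    · simp_all [Prod.ext_iff]
    · obtain ⟨rfl, rfl⟩ := LinearIndependent.pair_iff.1 hv a b h
      rfl
  rw [range_cons_cons_empty, ← binary_quadratic_pos_iff]
  simp only [mem_span_pair, forall_exists_index, cons_val_zero, cons_val_one]
  constructor
  · intro h a b hab
    simpa [Q.map_smul_add_smul] using h _ a b rfl ((hne a b).2 hab)
  · rintro h _ a b rfl hz
    simpa [Q.map_smul_add_smul] using h a b ((hne a b).1 hz)

def positiveSubspaces {X : Type*} [AddCommGroup X] [Module ℝ X] (q : X → ℝ) (n : ℕ) :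
    Set {P : Submodule ℝ X // Module.finrank ℝ P = n} :=
  {P | ∀ x ∈ (P : Submodule ℝ X), x ≠ 0 → 0 < q x}

theorem isOpen_positiveSubspaces_two {X : Type*} [AddCommGroup X] [Module ℝ X]
    [TopologicalSpace X] [ContinuousAdd X] (Q : QuadraticForm ℝ X) (hQ : Continuous Q) :
    IsOpen (positiveSubspaces Q 2) := by
  have hpolar : Continuous fun v : Fin 2 → X => polar Q (v 0) (v 1) := by
    unfold polar; fun_prop
  refine isOpen_coinduced.2 ?_
  convert ((isOpen_lt continuous_const (hQ.comp (continuous_apply 0))).inter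
    (isOpen_lt (hpolar.pow 2) ((continuous_const.mul (hQ.comp (continuous_apply 0))).mul
      (hQ.comp (continuous_apply 1))))).preimage continuous_subtype_val using 1
  ext ⟨v, hv⟩
  exact Q.pos_on_span_fin_two_iff hv

theorem SCSubspace.pos_of_invariant {X : Type*} [AddCommGroup X] [Module ℝ X]
    [TopologicalSpace X] {n : ℕ} {T : X →ₗ[ℝ] X} {M : Submodule ℝ X} (hM : SCSubspace n T M)
    (hT : Injective T) {q : X → ℝ} (hqT : ∀ x, q (T x) = q x)
    (hopen : IsOpen (positiveSubspaces q n)) (hne : (positiveSubspaces q n).Nonempty) :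
    ∀ x ∈ M, x ≠ 0 → 0 < q x := by
  obtain ⟨P, ⟨k, hPk⟩, hP⟩ := hM.2.2.exists_mem_open hopen hne
  intro x hx hx0
  have hk : (T ^ k) x ∈ (P : Submodule ℝ X) := hPk ▸ mem_map_of_mem hx
  have hk0 : (T ^ k) x ≠ 0 := by
    rw [Module.End.coe_pow]
    exact (hT.iterate k).ne_iff' (iterate_map_zero T k) |>.2 hx0
  have hqk : q ((T ^ k) x) = q x := by
    rw [Module.End.coe_pow]
    exact congrFun (iterate_invariant (g := q) (funext hqT) k) x
  exact hqk ▸ hP _ hk hk0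

theorem not_SCSubspace_two_of_invariant_indefinite {X : Type*} [AddCommGroup X] [Module ℝ X]
    [TopologicalSpace X] [ContinuousAdd X] {T : X →ₗ[ℝ] X} (hT : Injective T)
    (Q : QuadraticForm ℝ X) (hQ : Continuous Q) (hQT : ∀ x, Q (T x) = Q x)
    (hpos : (positiveSubspaces Q 2).Nonempty) (hneg : (positiveSubspaces (-Q) 2).Nonempty)
    (M : Submodule ℝ X) : ¬ SCSubspace 2 T M := by
  intro hM
  obtain ⟨x, hx, hx0⟩ : ∃ x ∈ M, x ≠ 0 := by
    refine M.ne_bot_iff.1 fun hbot => two_ne_zero ?_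
    rw [← hM.1, hbot, finrank_bot]
  have h₁ := hM.pos_of_invariant hT hQT (isOpen_positiveSubspaces_two Q hQ) hpos x hx hx0
  have h₂ := hM.pos_of_invariant hT (q := ⇑(-Q)) (by simp [hQT])
    (isOpen_positiveSubspaces_two (-Q) hQ.neg) hneg x hx hx0
  rw [_root_.neg_apply] at h₂
  linarith

theorem Matrix.toQuadraticForm'_apply {R n : Type*} [CommRing R] [Fintype n] [DecidableEq n]
    (D : Matrix n n R) (x : n → R) : D.toQuadraticForm' x = x ⬝ᵥ D *ᵥ x := by
  simp [toQuadraticForm', toLinearMap₂'_apply']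

theorem Matrix.continuous_toQuadraticForm' {n : Type*} [Fintype n] [DecidableEq n]
    (D : Matrix n n ℝ) : Continuous D.toQuadraticForm' := by
  simp only [funext D.toQuadraticForm'_apply]
  exact continuous_id.dotProduct (continuous_const.matrix_mulVec continuous_id)

theorem Matrix.toQuadraticForm'_neg {R n : Type*} [CommRing R] [Fintype n] [DecidableEq n]
    (D : Matrix n n R) : (-D).toQuadraticForm' = -D.toQuadraticForm' := by
  ext x
  simp [toQuadraticForm'_apply, neg_mulVec]

theorem Matrix.toQuadraticForm'_mulVec {R n : Type*} [CommRing R] [Fintype n] [DecidableEq n]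
    {D B : Matrix n n R} (h : Bᵀ * D * B = D) (x : n → R) :
    D.toQuadraticForm' (B *ᵥ x) = D.toQuadraticForm' x := by
  conv_rhs => rw [← h]
  simp only [toQuadraticForm'_apply, ← mulVec_mulVec, dotProduct_mulVec _ Bᵀ, vecMul_transpose]

theorem Matrix.mulVec_injective_of_transpose_mul_self {R n : Type*} [CommRing R] [Fintype n]
    [DecidableEq n] {B : Matrix n n R} (h : Bᵀ * B = 1) : Injective B.mulVec := fun x y hxy => by
  simpa [mulVec_mulVec, h] using congrArg (Bᵀ *ᵥ ·) hxy

section BlockDiagonal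

variable {R m o : Type*} [CommRing R] [Fintype m] [DecidableEq m] [Fintype o] [DecidableEq o]
  {A : o → Matrix m m R}

theorem Matrix.blockDiagonal_transpose_mul_self (hA : ∀ b, (A b)ᵀ * A b = 1) :
    (blockDiagonal A)ᵀ * blockDiagonal A = 1 := by
  simp only [blockDiagonal_transpose, ← blockDiagonal_mul, hA]
  exact blockDiagonal_one

theorem Matrix.blockDiagonal_transpose_mul_smul_one_mul (hA : ∀ b, (A b)ᵀ * A b = 1)
    (c : o → R) :
    (blockDiagonal A)ᵀ * blockDiagonal (fun b => c b • 1) * blockDiagonal A =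
      blockDiagonal (fun b => c b • 1) := by
  simp [blockDiagonal_transpose, ← blockDiagonal_mul, hA]

end BlockDiagonal

theorem rotM_transpose_mul_self (θ : ℝ) : (rotM θ)ᵀ * rotM θ = 1 := by
  ext i j
  fin_cases i <;> fin_cases j <;> simp [rotM, mul_apply, Fin.sum_univ_two, ← pow_two] <;> ring

theorem positiveSubspaces_blockDiagonal_smul_one_nonempty {o : Type*} [Fintype o] [DecidableEq o]
    {c : o → ℝ} {β : o} (hβ : 0 < c β) :
    (positiveSubspaces
      (blockDiagonal fun b => c b • (1 : Matrix (Fin 2) (Fin 2) ℝ)).toQuadraticForm' 2).Nonempty := by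
  have hv : LinearIndependent ℝ fun i : Fin 2 => Pi.single (M := fun _ => ℝ) (i, β) 1 :=
    (Pi.linearIndependent_single_one _ ℝ).comp _ fun i j h => (Prod.ext_iff.1 h).1
  refine ⟨⟨span ℝ (range _), by rw [finrank_span_eq_card hv, Fintype.card_fin]⟩,
    (QuadraticForm.pos_on_span_fin_two_iff _ hv).2 ?_⟩
  simp [toQuadraticForm', LinearMap.BilinMap.polar_toQuadraticMap, toLinearMap₂'_apply',
    blockDiagonal_apply, hβ]

theorem stmt16_general (θ₁ θ₂ : ℝ) :
    ¬ StronglyNSupercyclic 2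
      (Matrix.blockDiagonal fun i : Fin 2 => rotM (![θ₁, θ₂] i)).mulVecLin := by
  rintro ⟨M, hM⟩
  have hA : ∀ i : Fin 2, (rotM (![θ₁, θ₂] i))ᵀ * rotM (![θ₁, θ₂] i) = 1 :=
    fun i => rotM_transpose_mul_self _
  let D (w : Fin 2 → ℝ) := blockDiagonal fun b => w b • (1 : Matrix (Fin 2) (Fin 2) ℝ)
  have hneg : -(D ![1, -1]).toQuadraticForm' = (D ![-1, 1]).toQuadraticForm' := by
    rw [← toQuadraticForm'_neg, ← blockDiagonal_neg]
    congr 2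
    ext b : 1
    fin_cases b <;> simp
  have hT : Injective (blockDiagonal fun i : Fin 2 => rotM (![θ₁, θ₂] i)).mulVecLin :=
    mulVec_injective_of_transpose_mul_self (blockDiagonal_transpose_mul_self hA)
  refine not_SCSubspace_two_of_invariant_indefinite hT
    (D ![1, -1]).toQuadraticForm' (D ![1, -1]).continuous_toQuadraticForm'
    (toQuadraticForm'_mulVec (blockDiagonal_transpose_mul_smul_one_mul hA _))
    (positiveSubspaces_blockDiagonal_smul_one_nonempty (β := 0) (by simp))
    (hneg ▸ positiveSubspaces_blockDiagonal_smul_one_nonempty (β := 1) (by simp)) M hM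

theorem stmt16 (θ₁ θ₂ : ℝ) (hθ : LinearIndependent ℚ ![θ₁, θ₂, Real.pi]) :
    ¬ StronglyNSupercyclic 2
      (Matrix.blockDiagonal fun i : Fin 2 => rotM (![θ₁, θ₂] i)).mulVecLin :=
  stmt16_general θ₁ θ₂
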